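/- arXiv:1409.7133 — 8 statements merged into one kernel-verified Lean document; each statement's English description precedes it below -/
import Mathlib

section
/- Let G be a subset partition graph of dimension d on symbol set [n]. (i) If G' is obtained from G by adding an edge between two distinct nonadjacent vertices, then each of the properties dimension reduction, adjacency, and endpoint count, if satisfied by G, is also satisfied by G'. (ii) If G' is obtained from G by contracting an edge {U, V} of G (replacing the two vertices U and V by the single vertex U ∪ V, which is joined to every other vertex that was adjacent to U or to V), then each of the properties dimension reduction, adjacency, and endpoint count, if satisfied by G, is also satisfied by G'. -/
/-- Dimension reduction for a subset partition graph: for every `F` of cardinality at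
most `d - 1`, the subgraph induced on the vertices containing a `d`-set containing `F`
is connected. -/
def spgDimRed (n d : ℕ) {V : Type} (G : SimpleGraph V)
    (part : V → Finset (Finset (Fin n))) : Prop :=
  ∀ F : Finset (Fin n), F.card ≤ d - 1 →
    (G.induce {v | ∃ A ∈ part v, F ⊆ A}).Connected

/-- Adjacency for a subset partition graph. -/
def spgAdj (n d : ℕ) {V : Type} (G : SimpleGraph V)
    (part : V → Finset (Finset (Fin n))) : Prop :=
  ∀ (v v' : V) (A A' : Finset (Fin n)), A ∈ part v → A' ∈ part v' →
    (A ∩ A').card = d - 1 → v = v' ∨ G.Adj v v'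

/-- Endpoint count for a subset partition graph: every `(d-1)`-set is contained in at
most two members of the underlying family `𝒜 = ⋃ v, part v`. -/
def spgEndpoint (n d : ℕ) {V : Type} [Fintype V]
    (part : V → Finset (Finset (Fin n))) : Prop :=
  ∀ F : Finset (Fin n), F.card = d - 1 →
    ((Finset.univ.biUnion part).filter (fun A => F ⊆ A)).card ≤ 2

/-- The graph obtained by contracting the edge `{u, v}`: the vertices `u` and `v` are
replaced by a single vertex (represented by `u`), joined to every vertex that was
adjacent to `u` or to `v`. -/
def contractGraph {V : Type} [DecidableEq V] (G : SimpleGraph V) (u v : V) :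
    SimpleGraph {w : V // w ≠ v} :=
  SimpleGraph.fromRel (fun w w' =>
    G.Adj w w' ∨ ((w : V) = u ∧ G.Adj v w') ∨ ((w' : V) = u ∧ G.Adj w v))

/-- The partition after contracting the edge `{u, v}`: the merged vertex carries
`part u ∪ part v`. -/
def contractPart {V : Type} [DecidableEq V] {n : ℕ}
    (part : V → Finset (Finset (Fin n))) (u v : V) :
    {w : V // w ≠ v} → Finset (Finset (Fin n)) :=
  fun w => if (w : V) = u then part u ∪ part v else part (w : V)


def qmap {V : Type} [DecidableEq V] (u v : V) (huv : u ≠ v) : V → {w : V // w ≠ v} :=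
  fun w => if h : w = v then ⟨u, huv⟩ else ⟨w, h⟩

lemma reach_map {α β : Type} {G : SimpleGraph α} {H : SimpleGraph β} (f : α → β)
    (hstep : ∀ a b, G.Adj a b → f a = f b ∨ H.Adj (f a) (f b))
    {a b : α} (h : G.Reachable a b) : H.Reachable (f a) (f b) := by
  obtain ⟨p⟩ := h
  induction p with
  | nil => exact SimpleGraph.Reachable.refl _
  | cons h p ih =>
    rcases hstep _ _ h with he | ha
    · rw [he]; exact ih
    · exact (SimpleGraph.Adj.reachable ha).trans ih

lemma contract_step {V : Type} [DecidableEq V] (G : SimpleGraph V) (u v : V)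
    (huv : G.Adj u v) (a b : V) (hab : G.Adj a b) :
    qmap u v huv.ne a = qmap u v huv.ne b ∨
      (contractGraph G u v).Adj (qmap u v huv.ne a) (qmap u v huv.ne b) := by
  by_cases hav : a = v
  · have hbv : b ≠ v := fun h => hab.ne (hav.trans h.symm)
    have hvb : G.Adj v b := hav ▸ hab
    simp only [qmap, dif_pos hav, dif_neg hbv]
    by_cases hbu : b = u
    · exact Or.inl (Subtype.ext hbu.symm)
    · refine Or.inr ?_
      rw [contractGraph, SimpleGraph.fromRel_adj]
      exact ⟨fun h => hbu (congrArg Subtype.val h).symm,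
        Or.inl (Or.inr (Or.inl ⟨rfl, hvb⟩))⟩
  · by_cases hbv : b = v
    · have hav2 : G.Adj a v := hbv ▸ hab
      simp only [qmap, dif_pos hbv, dif_neg hav]
      by_cases hau : a = u
      · exact Or.inl (Subtype.ext hau)
      · refine Or.inr ?_
        rw [contractGraph, SimpleGraph.fromRel_adj]
        exact ⟨fun h => hau (congrArg Subtype.val h),
          Or.inl (Or.inr (Or.inr ⟨rfl, hav2⟩))⟩
    · simp only [qmap, dif_neg hav, dif_neg hbv]
      refine Or.inr ?_
      rw [contractGraph, SimpleGraph.fromRel_adj]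
      exact ⟨fun h => hab.ne (congrArg Subtype.val h), Or.inl (Or.inl hab)⟩

lemma part_subset_contract {V : Type} [DecidableEq V] {n : ℕ}
    (part : V → Finset (Finset (Fin n))) (u v : V) (huv : u ≠ v) (w : V) :
    part w ⊆ contractPart part u v (qmap u v huv w) := by
  by_cases hwv : w = v
  · subst hwv
    rw [qmap, dif_pos rfl, contractPart]
    simp only [if_pos rfl]
    exact Finset.subset_union_right
  · rw [qmap, dif_neg hwv, contractPart]
    by_cases hwu : w = u
    · subst hwu; simp only [if_pos rfl]; exact Finset.subset_union_left
    · simp only [if_neg hwu]; exact subset_rfl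

lemma contract_lift {V : Type} [DecidableEq V] {n : ℕ}
    (part : V → Finset (Finset (Fin n))) (u v : V) (huv : u ≠ v)
    (x : {w : V // w ≠ v}) {A : Finset (Fin n)}
    (hA : A ∈ contractPart part u v x) :
    ∃ a, A ∈ part a ∧ qmap u v huv a = x := by
  rw [contractPart] at hA
  by_cases hx : (x : V) = u
  · rw [if_pos hx, Finset.mem_union] at hA
    rcases hA with h | h
    · exact ⟨u, h, by rw [qmap, dif_neg huv]; exact Subtype.ext hx.symm⟩
    · exact ⟨v, h, by rw [qmap, dif_pos rfl]; exact Subtype.ext hx.symm⟩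
  · rw [if_neg hx] at hA
    exact ⟨x, hA, by rw [qmap, dif_neg x.2]⟩

/-- Dimension reduction, adjacency and endpoint count are preserved by
(i) adding an edge between two distinct nonadjacent vertices, and
(ii) contracting an edge. -/
theorem spg_properties_preserved_by_edge_addition_and_contraction
    (n d : ℕ) (V : Type) [Fintype V] [DecidableEq V]
    (G : SimpleGraph V) (part : V → Finset (Finset (Fin n)))
    (hconn : G.Connected)
    (hne : ∀ v, (part v).Nonempty)
    (hcard : ∀ v, ∀ A ∈ part v, A.card = d)
    (hdisj : ∀ v w, v ≠ w → Disjoint (part v) (part w)) :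
    (∀ u v : V, u ≠ v → ¬ G.Adj u v →
      ((spgDimRed n d G part →
          spgDimRed n d (G ⊔ SimpleGraph.fromEdgeSet {s(u, v)}) part) ∧
       (spgAdj n d G part →
          spgAdj n d (G ⊔ SimpleGraph.fromEdgeSet {s(u, v)}) part) ∧
       (spgEndpoint n d part → spgEndpoint n d part))) ∧
    (∀ u v : V, G.Adj u v →
      ((spgDimRed n d G part →
          spgDimRed n d (contractGraph G u v) (contractPart part u v)) ∧
       (spgAdj n d G part →
          spgAdj n d (contractGraph G u v) (contractPart part u v)) ∧
       (spgEndpoint n d part → spgEndpoint n d (contractPart part u v)))) := by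
  constructor
  · intro u v huv hnadj
    refine ⟨?_, ?_, id⟩
    · intro h F hF
      exact (h F hF).mono (fun a b hab => Or.inl hab)
    · intro h w w' A A' hA hA' hcap
      rcases h w w' A A' hA hA' hcap with he | ha
      · exact Or.inl he
      · exact Or.inr (Or.inl ha)
  · intro u v huv
    have hne' : u ≠ v := huv.ne
    refine ⟨?_, ?_, ?_⟩
    · intro h F hF
      have hc := h F hF
      set S : Set V := {w | ∃ A ∈ part w, F ⊆ A} with hS
      set S' : Set {w : V // w ≠ v} := {w | ∃ A ∈ contractPart part u v w, F ⊆ A} with hS'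
      have hmem : ∀ w : V, w ∈ S → qmap u v hne' w ∈ S' := by
        rintro w ⟨A, hAw, hFA⟩
        exact ⟨A, part_subset_contract part u v hne' w hAw, hFA⟩
      rw [SimpleGraph.connected_iff]
      constructor
      · rintro ⟨x, hx⟩ ⟨y, hy⟩
        obtain ⟨A, hA, hFA⟩ := hx
        obtain ⟨a, haA, haq⟩ := contract_lift part u v hne' x hA
        obtain ⟨A', hA', hFA'⟩ := hy
        obtain ⟨b, hbA, hbq⟩ := contract_lift part u v hne' y hA'
        have ha : a ∈ S := ⟨A, haA, hFA⟩
        have hb : b ∈ S := ⟨A', hbA, hFA'⟩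
        have hr := hc.preconnected ⟨a, ha⟩ ⟨b, hb⟩
        have hpush := reach_map
          (G := G.induce S) (H := (contractGraph G u v).induce S')
          (fun x => ⟨qmap u v hne' x.1, hmem x.1 x.2⟩)
          (fun p q hpq => by
            rcases contract_step G u v huv p.1 q.1 hpq with he | hadj
            · exact Or.inl (Subtype.ext he)
            · exact Or.inr hadj) hr
        have hx' : (⟨x, ⟨A, hA, hFA⟩⟩ : S') = ⟨qmap u v hne' a, hmem a ha⟩ :=
          Subtype.ext haq.symm
        have hy' : (⟨y, ⟨A', hA', hFA'⟩⟩ : S') = ⟨qmap u v hne' b, hmem b hb⟩ :=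
          Subtype.ext hbq.symm
        rw [hx', hy']
        exact hpush
      · obtain ⟨⟨w, hw⟩⟩ := hc.nonempty
        exact ⟨⟨qmap u v hne' w, hmem w hw⟩⟩
    · intro h x y A A' hA hA' hcap
      obtain ⟨a, haA, haq⟩ := contract_lift part u v hne' x hA
      obtain ⟨b, hbA, hbq⟩ := contract_lift part u v hne' y hA'
      rcases h a b A A' haA hbA hcap with he | hadj
      · left; rw [← haq, ← hbq, he]
      · rcases contract_step G u v huv a b hadj with he | hadj'
        · left; rw [← haq, ← hbq, he]
        · right; rw [← haq, ← hbq]; exact hadj'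
    · intro h F hF
      refine le_trans (Finset.card_le_card (Finset.filter_subset_filter _ ?_)) (h F hF)
      intro A hA
      rw [Finset.mem_biUnion] at hA ⊢
      obtain ⟨x, _, hx⟩ := hA
      rw [contractPart] at hx
      by_cases hxu : (x : V) = u
      · rw [if_pos hxu, Finset.mem_union] at hx
        rcases hx with h' | h'
        · exact ⟨u, Finset.mem_univ _, h'⟩
        · exact ⟨v, Finset.mem_univ _, h'⟩
      · rw [if_neg hxu] at hx
        exact ⟨x, Finset.mem_univ _, hx⟩
end

section
/- Let G be a subset partition graph of dimension d on symbol set [n] with underlying family 𝒜 of d-sets and diameter δ(G). Then there exists a layer family L_1, …, L_ℓ of dimension d on [n] whose layers again partition 𝒜, such that ℓ − 1 = δ(G), and such that if G satisfies any or all of the properties dimension reduction, adjacency, strong adjacency, and endpoint count, then the layer family satisfies the same properties. -/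
/-- Strong adjacency for a subset partition graph. -/
def spgStrongAdj (n d : ℕ) {V : Type} (G : SimpleGraph V)
    (part : V → Finset (Finset (Fin n))) : Prop :=
  spgAdj n d G part ∧
  ∀ v v' : V, G.Adj v v' →
    ∃ A ∈ part v, ∃ A' ∈ part v', (A ∩ A').card = d - 1

/-- Dimension reduction for a layer family. -/
def lfDimRed (n d : ℕ) {ℓ : ℕ} (L : Fin ℓ → Finset (Finset (Fin n))) : Prop :=
  ∀ F : Finset (Fin n), F.card ≤ d - 1 →
    ∀ k₁ k₂ k₃ : Fin ℓ, k₁ ≤ k₂ → k₂ ≤ k₃ →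
      (∃ A ∈ L k₁, F ⊆ A) → (∃ A ∈ L k₃, F ⊆ A) → ∃ A ∈ L k₂, F ⊆ A

/-- Adjacency for a layer family. -/
def lfAdj (n d : ℕ) {ℓ : ℕ} (L : Fin ℓ → Finset (Finset (Fin n))) : Prop :=
  ∀ (k k' : Fin ℓ) (A A' : Finset (Fin n)), A ∈ L k → A' ∈ L k' →
    (A ∩ A').card = d - 1 → Nat.dist (k : ℕ) (k' : ℕ) ≤ 1

/-- Strong adjacency for a layer family. -/
def lfStrongAdj (n d : ℕ) {ℓ : ℕ} (L : Fin ℓ → Finset (Finset (Fin n))) : Prop :=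
  lfAdj n d L ∧
  ∀ (k : Fin ℓ) (h : (k : ℕ) + 1 < ℓ),
    ∃ A ∈ L k, ∃ A' ∈ L ⟨(k : ℕ) + 1, h⟩, (A ∩ A').card = d - 1

/-- Endpoint count for a layer family. -/
def lfEndpoint (n d : ℕ) {ℓ : ℕ} (L : Fin ℓ → Finset (Finset (Fin n))) : Prop :=
  ∀ F : Finset (Fin n), F.card = d - 1 →
    ((Finset.univ.biUnion L).filter (fun A => F ⊆ A)).card ≤ 2

section Helpers

open SimpleGraph

variable {W : Type*} {H : SimpleGraph W}

private lemma walk_ivt (f : W → ℕ) (hf : ∀ a b : W, H.Adj a b → f b ≤ f a + 1) :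
    ∀ {a b : W} (p : H.Walk a b) (m : ℕ), f a ≤ m → m ≤ f b →
      ∃ c ∈ p.support, f c = m := by
  intro a b p
  induction p with
  | nil => exact fun m h1 h2 => ⟨_, by simp, le_antisymm h1 h2⟩
  | @cons a x b h q ih =>
    intro m h1 h2
    rcases eq_or_lt_of_le h1 with heq | hlt
    · exact ⟨a, by simp, heq⟩
    · obtain ⟨c, hc, hfc⟩ := ih m ((hf _ _ h).trans hlt) h2
      exact ⟨c, by simp [hc], hfc⟩

private lemma dist_getVert_le {G : SimpleGraph W} (hconn : G.Connected) :
    ∀ {a b : W} (p : G.Walk a b) (i : ℕ), G.dist a (p.getVert i) ≤ i := by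
  intro a b p
  induction p with
  | nil => intro i; simp [SimpleGraph.Walk.getVert, SimpleGraph.dist_self]
  | @cons a x b h q ih =>
    intro i
    cases i with
    | zero => simp [SimpleGraph.Walk.getVert_zero, SimpleGraph.dist_self]
    | succ j =>
      rw [SimpleGraph.Walk.getVert_cons_succ]
      calc G.dist a (q.getVert j) ≤ G.dist a x + G.dist x (q.getVert j) :=
            hconn.dist_triangle
        _ ≤ 1 + j := by
            have := ih j
            have h1 : G.dist a x = 1 := SimpleGraph.dist_eq_one_iff_adj.mpr h
            omega
        _ = j + 1 := by omega

end Helpers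

/-- Every subset partition graph can be turned into a layer family on the same family
`𝒜` whose diameter (number of layers minus one) equals the diameter of the graph, and
which inherits dimension reduction, adjacency, strong adjacency and endpoint count. -/
theorem spg_to_layer_family (n d : ℕ) (V : Type) [Fintype V] [DecidableEq V]
    (G : SimpleGraph V) (part : V → Finset (Finset (Fin n)))
    (hconn : G.Connected)
    (hne : ∀ v, (part v).Nonempty)
    (hcard : ∀ v, ∀ A ∈ part v, A.card = d)
    (hdisj : ∀ v w, v ≠ w → Disjoint (part v) (part w)) :
    ∃ (ℓ : ℕ) (L : Fin ℓ → Finset (Finset (Fin n))),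
      0 < ℓ ∧
      (∀ k, (L k).Nonempty) ∧
      (∀ k, ∀ A ∈ L k, A.card = d) ∧
      (∀ k k', k ≠ k' → Disjoint (L k) (L k')) ∧
      (∀ A : Finset (Fin n), (∃ k, A ∈ L k) ↔ (∃ v, A ∈ part v)) ∧
      ℓ - 1 = G.diam ∧
      (spgDimRed n d G part → lfDimRed n d L) ∧
      (spgAdj n d G part → lfAdj n d L) ∧
      (spgStrongAdj n d G part → lfStrongAdj n d L) ∧
      (spgEndpoint n d part → lfEndpoint n d L) := by
  classical
  have hV : Nonempty V := hconn.nonempty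
  obtain ⟨u, v₀, huv⟩ := G.exists_dist_eq_diam
  have hetop : G.ediam ≠ ⊤ := by
    obtain ⟨a, b, hab⟩ := G.exists_edist_eq_ediam_of_finite
    rw [← hab]
    exact SimpleGraph.edist_ne_top_iff_reachable.mpr (hconn a b)
  have hle : ∀ w, G.dist u w ≤ G.diam := fun w => G.dist_le_diam hetop
  have hstep : ∀ a b : V, G.Adj a b → G.dist u b ≤ G.dist u a + 1 := by
    intro a b hab
    have h1 : G.dist a b = 1 := SimpleGraph.dist_eq_one_iff_adj.mpr hab
    have := hconn.dist_triangle (u := u) (v := a) (w := b)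
    omega
  have hattain : ∀ k : ℕ, k ≤ G.diam → ∃ w, G.dist u w = k := by
    intro k hk
    obtain ⟨p⟩ := hconn u v₀
    obtain ⟨c, _, hc⟩ := walk_ivt (fun w => G.dist u w) hstep p k
      (by simp [SimpleGraph.dist_self]) (by show k ≤ G.dist u v₀; rw [huv]; exact hk)
    exact ⟨c, hc⟩
  set D := G.diam with hD
  refine ⟨D + 1, fun k => (Finset.univ.filter (fun v => G.dist u v = (k : ℕ))).biUnion part,
    Nat.succ_pos _, ?_, ?_, ?_, ?_, ?_, ?_, ?_, ?_, ?_⟩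
  · -- nonempty
    intro k
    obtain ⟨w, hw⟩ := hattain k (Nat.lt_succ_iff.mp k.isLt)
    obtain ⟨A, hA⟩ := hne w
    exact ⟨A, Finset.mem_biUnion.mpr ⟨w, by simp [hw], hA⟩⟩
  · -- card
    intro k A hA
    obtain ⟨v, hv, hAv⟩ := Finset.mem_biUnion.mp hA
    exact hcard v A hAv
  · -- disjoint
    intro k k' hkk'
    rw [Finset.disjoint_left]
    intro A hA hA'
    obtain ⟨v, hv, hAv⟩ := Finset.mem_biUnion.mp hA
    obtain ⟨w, hw, hAw⟩ := Finset.mem_biUnion.mp hA'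
    simp only [Finset.mem_filter, Finset.mem_univ, true_and] at hv hw
    have hvw : v ≠ w := by
      rintro rfl
      exact hkk' (Fin.ext (hv ▸ hw))
    exact Finset.disjoint_left.mp (hdisj v w hvw) hAv hAw
  · -- partition
    intro A
    constructor
    · rintro ⟨k, hA⟩
      obtain ⟨v, _, hAv⟩ := Finset.mem_biUnion.mp hA
      exact ⟨v, hAv⟩
    · rintro ⟨v, hAv⟩
      exact ⟨⟨G.dist u v, Nat.lt_succ_of_le (hle v)⟩,
        Finset.mem_biUnion.mpr ⟨v, by simp, hAv⟩⟩
  · -- length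
    simp
  · -- dim red
    intro hdr F hF k₁ k₂ k₃ h12 h23 ⟨A₁, hA₁, hFA₁⟩ ⟨A₃, hA₃, hFA₃⟩
    obtain ⟨v₁, hv₁, hAv₁⟩ := Finset.mem_biUnion.mp hA₁
    obtain ⟨v₃, hv₃, hAv₃⟩ := Finset.mem_biUnion.mp hA₃
    simp only [Finset.mem_filter, Finset.mem_univ, true_and] at hv₁ hv₃
    have hC := hdr F hF
    set S : Set V := {v | ∃ A ∈ part v, F ⊆ A} with hS
    have hm1 : v₁ ∈ S := ⟨A₁, hAv₁, hFA₁⟩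
    have hm3 : v₃ ∈ S := ⟨A₃, hAv₃, hFA₃⟩
    obtain ⟨p⟩ := hC.preconnected ⟨v₁, hm1⟩ ⟨v₃, hm3⟩
    have hf : ∀ a b : S, (G.induce S).Adj a b →
        G.dist u (b : V) ≤ G.dist u (a : V) + 1 := by
      intro a b hab
      exact hstep _ _ hab
    obtain ⟨c, _, hc⟩ := walk_ivt (fun w : S => G.dist u (w : V)) hf p (k₂ : ℕ)
      (by show (G.dist u v₁) ≤ (k₂:ℕ); rw [hv₁]; exact h12)
      (by show (k₂:ℕ) ≤ G.dist u v₃; rw [hv₃]; exact h23)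
    obtain ⟨A₂, hAv₂, hFA₂⟩ := c.2
    exact ⟨A₂, Finset.mem_biUnion.mpr ⟨(c : V), by simp [hc], hAv₂⟩, hFA₂⟩
  · -- adj
    intro hadj k k' A A' hA hA' hcap
    obtain ⟨v, hv, hAv⟩ := Finset.mem_biUnion.mp hA
    obtain ⟨w, hw, hAw⟩ := Finset.mem_biUnion.mp hA'
    simp only [Finset.mem_filter, Finset.mem_univ, true_and] at hv hw
    have hdist : Nat.dist (k : ℕ) (k' : ℕ) = (k : ℕ) - k' + ((k' : ℕ) - k) := rfl
    rcases hadj v w A A' hAv hAw hcap with rfl | h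
    · rw [hv] at hw; omega
    · have h1 := hstep v w h
      have h2 := hstep w v h.symm
      omega
  · -- strong adj
    intro hsadj
    constructor
    · intro k k' A A' hA hA' hcap
      obtain ⟨v, hv, hAv⟩ := Finset.mem_biUnion.mp hA
      obtain ⟨w, hw, hAw⟩ := Finset.mem_biUnion.mp hA'
      simp only [Finset.mem_filter, Finset.mem_univ, true_and] at hv hw
      have hdist : Nat.dist (k : ℕ) (k' : ℕ) = (k : ℕ) - k' + ((k' : ℕ) - k) := rfl
      rcases hsadj.1 v w A A' hAv hAw hcap with rfl | h
      · rw [hv] at hw; omega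
      · have h1 := hstep v w h
        have h2 := hstep w v h.symm
        omega
    · intro k hk
      obtain ⟨v', hv'⟩ := hattain ((k : ℕ) + 1) (by omega)
      obtain ⟨p, hp⟩ := (hconn u v').exists_walk_length_eq_dist
      rw [hv'] at hp
      set w := p.getVert (k : ℕ) with hwdef
      have hadjwv : G.Adj w v' := by
        have h1 : ((k : ℕ)) < p.length := by omega
        have h2 := p.adj_getVert_succ h1
        rwa [show (k : ℕ) + 1 = p.length by omega, p.getVert_length] at h2
      have hdw : G.dist u w = (k : ℕ) := by
        have h1 : G.dist u w ≤ (k : ℕ) := dist_getVert_le hconn p (k : ℕ)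
        have h2 := hstep w v' hadjwv
        omega
      obtain ⟨A, hAw, A', hAv', hcap⟩ := hsadj.2 w v' hadjwv
      exact ⟨A, Finset.mem_biUnion.mpr ⟨w, by simp [hdw], hAw⟩,
        A', Finset.mem_biUnion.mpr ⟨v', by simp [hv'], hAv'⟩, hcap⟩
  · -- endpoint
    intro hep F hF
    have heq : (Finset.univ.biUnion fun k : Fin (D + 1) =>
        (Finset.univ.filter (fun v => G.dist u v = (k : ℕ))).biUnion part) =
        Finset.univ.biUnion part := by
      ext A
      simp only [Finset.mem_biUnion, Finset.mem_univ, true_and, Finset.mem_filter]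
      constructor
      · rintro ⟨k, v, _, hAv⟩
        exact ⟨v, hAv⟩
      · rintro ⟨v, hAv⟩
        exact ⟨⟨G.dist u v, Nat.lt_succ_of_le (hle v)⟩, v, by simp, hAv⟩
    rw [heq]
    exact hep F hF
end

section
/- Let G be a subset partition graph of dimension d on symbol set [n] with underlying family 𝒜 of d-sets, and suppose G has at least one edge. Then there exists a subset partition graph G'' of dimension d on [n] with the same underlying family 𝒜, in which every vertex consists of exactly one d-set, whose diameter equals the diameter of G, and such that if G satisfies any or all of the properties dimension reduction, adjacency, and endpoint count, then G'' satisfies the same properties. -/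
/-!
Index the `d`-sets themselves and join two distinct ones when the vertices of `G` containing
them coincide or are adjacent: this is the blow-up of `G` along the map `𝒜 → 𝒱` sending a set
to its part, in which every part becomes a clique. Distances between sets in different parts
equal the distances of their parts, since any walk projects to `G` and any walk of `G` lifts
through a section of the projection passing through the prescribed endpoints. Sets in a common
part are at distance `1`, which does not exceed the diameter as soon as `G` has an edge. The
dimension-reduction subgraphs of the blow-up are the blow-ups of those of `G`, so they stay
connected, and adjacency and endpoint count only involve the family `𝒜` and the relation
"same or adjacent part".
-/

open Finset Function

namespace SimpleGraph

variable {V W : Type*} {G : SimpleGraph V} {f : W → V}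

variable (G f) in
def blowup : SimpleGraph W where
  Adj a b := a ≠ b ∧ (f a = f b ∨ G.Adj (f a) (f b))
  symm := ⟨fun _ _ h => ⟨h.1.symm, h.2.imp Eq.symm Adj.symm⟩⟩
  loopless := ⟨fun _ h => h.1 rfl⟩

@[simp]
lemma blowup_adj {a b : W} :
    (G.blowup f).Adj a b ↔ a ≠ b ∧ (f a = f b ∨ G.Adj (f a) (f b)) :=
  Iff.rfl

def homBlowupOfRightInverse {s : V → W} (hs : RightInverse s f) : G →g G.blowup f where
  toFun := s
  map_rel' {u v} h := ⟨fun e => h.ne (by rw [← hs u, ← hs v, e]), .inr (by rwa [hs u, hs v])⟩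

lemma Hom.edist_le {H : SimpleGraph W} (φ : G →g H) (u v : V) :
    H.edist (φ u) (φ v) ≤ G.edist u v := by
  rw [edist_eq_sInf (G := G)]
  refine le_sInf ?_
  rintro _ ⟨p, rfl⟩
  simpa using (p.map φ).edist_le

lemma edist_le_edist_blowup (a b : W) : G.edist (f a) (f b) ≤ (G.blowup f).edist a b := by
  rw [edist_eq_sInf (G := G.blowup f)]
  refine le_sInf ?_
  rintro _ ⟨p, rfl⟩
  induction p with
  | nil => simp
  | @cons a c b h p ih =>
    have hstep : G.edist (f a) (f c) ≤ 1 :=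
      edist_le_one_iff_adj_or_eq.2 h.2.symm
    calc G.edist (f a) (f b) ≤ G.edist (f a) (f c) + G.edist (f c) (f b) := G.edist_triangle
      _ ≤ 1 + p.length := add_le_add hstep ih
      _ = (Walk.cons h p).length := by rw [Walk.length_cons]; push_cast; ring

lemma exists_rightInverse_apply_eq_apply_eq (hf : Surjective f) {a b : W} (hab : f a ≠ f b) :
    ∃ s : V → W, RightInverse s f ∧ s (f a) = a ∧ s (f b) = b := by
  classical
  refine ⟨update (update (surjInv hf) (f a) a) (f b) b, fun x => ?_, by simp [hab], by simp⟩
  rcases eq_or_ne x (f b) with rfl | hxb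
  · simp
  rcases eq_or_ne x (f a) with rfl | hxa
  · simp [hxb]
  simp [hxa, hxb, surjInv_eq hf]

lemma edist_blowup_of_ne (hf : Surjective f) {a b : W} (hab : f a ≠ f b) :
    (G.blowup f).edist a b = G.edist (f a) (f b) := by
  refine le_antisymm ?_ (edist_le_edist_blowup a b)
  obtain ⟨s, hs, ha, hb⟩ := exists_rightInverse_apply_eq_apply_eq hf hab
  calc (G.blowup f).edist a b = (G.blowup f).edist (s (f a)) (s (f b)) := by rw [ha, hb]
    _ ≤ G.edist (f a) (f b) := (homBlowupOfRightInverse hs).edist_le _ _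

lemma Connected.blowup (hG : G.Connected) (hf : Surjective f) : (G.blowup f).Connected := by
  rw [connected_iff]
  refine ⟨fun a b => ?_, hG.nonempty.map (surjInv hf)⟩
  by_cases hab : f a = f b
  · rcases eq_or_ne a b with rfl | hne
    · rfl
    · exact (blowup_adj.2 ⟨hne, .inl hab⟩).reachable
  · apply reachable_of_edist_ne_top
    rw [edist_blowup_of_ne hf hab]
    exact edist_ne_top_iff_reachable.2 (hG _ _)

lemma ediam_blowup [Nontrivial V] (hf : Surjective f) : (G.blowup f).ediam = G.ediam := by
  refine le_antisymm (ediam_le_of_edist_le fun a b => ?_) (ediam_le_of_edist_le fun u v => ?_)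
  · by_cases hab : f a = f b
    · rcases eq_or_ne a b with rfl | hne
      · simp
      · rw [edist_eq_one_iff_adj.2 (blowup_adj.2 ⟨hne, .inl hab⟩), Order.one_le_iff_pos,
          pos_iff_ne_zero]
        exact ediam_ne_zero
    · rw [edist_blowup_of_ne hf hab]
      exact edist_le_ediam
  · obtain ⟨a, rfl⟩ := hf u
    obtain ⟨b, rfl⟩ := hf v
    exact (edist_le_edist_blowup a b).trans edist_le_ediam

lemma induce_blowup (s : Set W) :
    (G.blowup f).induce s = (G.induce (f '' s)).blowup (s.imageFactorization f) := by
  ext a b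
  simp [Subtype.ext_iff, Set.imageFactorization]

lemma Connected.induce_blowup {s : Set W} {t : Set V} (hG : (G.induce t).Connected)
    (hst : f '' s = t) : ((G.blowup f).induce s).Connected := by
  subst hst
  rw [SimpleGraph.induce_blowup]
  exact hG.blowup Set.imageFactorization_surjective

end SimpleGraph

open SimpleGraph

section SubsetPartition

variable {α V : Type*} [Fintype V] [DecidableEq α] {part : V → Finset α}

variable (part) in
noncomputable def vertexOf (a : {A // A ∈ univ.biUnion part}) : V :=
  (mem_biUnion.1 a.2).choose

lemma mem_part_vertexOf (a : {A // A ∈ univ.biUnion part}) : a.1 ∈ part (vertexOf part a) :=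
  (mem_biUnion.1 a.2).choose_spec.2

lemma vertexOf_eq_iff (hdisj : Pairwise (Disjoint on part)) {a : {A // A ∈ univ.biUnion part}}
    {v : V} : vertexOf part a = v ↔ a.1 ∈ part v := by
  refine ⟨fun h => h ▸ mem_part_vertexOf a, fun h => ?_⟩
  by_contra hne
  exact disjoint_left.1 (hdisj hne) (mem_part_vertexOf a) h

lemma vertexOf_surjective (hne : ∀ v, (part v).Nonempty) (hdisj : Pairwise (Disjoint on part)) :
    Surjective (vertexOf part) := fun v =>
  let ⟨A, hA⟩ := hne v
  ⟨⟨A, mem_biUnion.2 ⟨v, mem_univ v, hA⟩⟩, (vertexOf_eq_iff hdisj).2 hA⟩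

lemma image_vertexOf_setOf (hdisj : Pairwise (Disjoint on part)) (p : α → Prop) :
    vertexOf part '' {a | p a.1} = {v | ∃ A ∈ part v, p A} := by
  ext v
  constructor
  · rintro ⟨a, ha, rfl⟩
    exact ⟨a.1, mem_part_vertexOf a, ha⟩
  · rintro ⟨A, hA, hp⟩
    exact ⟨⟨A, mem_biUnion.2 ⟨v, mem_univ v, hA⟩⟩, hp, (vertexOf_eq_iff hdisj).2 hA⟩

lemma biUnion_singleton_val (s : Finset α) [Fintype {A // A ∈ s}] :
    univ.biUnion (fun a : {A // A ∈ s} => ({a.1} : Finset α)) = s := by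
  ext A
  simp

end SubsetPartition

section SubsetPartitionGraph

variable {n d : ℕ} {V : Type} [Fintype V] {G : SimpleGraph V} {part : V → Finset (Finset (Fin n))}

lemma spgDimRed_blowup (hdisj : Pairwise (Disjoint on part)) (h : spgDimRed n d G part) :
    spgDimRed n d (G.blowup (vertexOf part)) (fun a => {a.1}) := by
  intro F hF
  have hset : {a : {A // A ∈ univ.biUnion part} | ∃ A ∈ ({a.1} : Finset _), F ⊆ A} =
      {a | F ⊆ a.1} := by
    simp
  rw [hset]
  exact (h F hF).induce_blowup (image_vertexOf_setOf hdisj _)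

lemma spgAdj_blowup (h : spgAdj n d G part) :
    spgAdj n d (G.blowup (vertexOf part)) (fun a => {a.1}) := by
  intro a b A B hA hB hcap
  rw [mem_singleton] at hA hB
  subst hA hB
  rcases eq_or_ne a b with hab | hab
  · exact .inl hab
  · exact .inr ⟨hab, h _ _ _ _ (mem_part_vertexOf a) (mem_part_vertexOf b) hcap⟩

lemma spgEndpoint_singleton (h : spgEndpoint n d part) :
    spgEndpoint n d
      (fun a : {A // A ∈ univ.biUnion part} => ({a.1} : Finset (Finset (Fin n)))) := by
  intro F hF
  rw [biUnion_singleton_val]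
  exact h F hF

end SubsetPartitionGraph

theorem spg_to_singleton_spg_general (n d : ℕ) (V : Type) [Fintype V]
    (G : SimpleGraph V) (part : V → Finset (Finset (Fin n)))
    (hconn : G.Connected)
    (hne : ∀ v, (part v).Nonempty)
    (hcard : ∀ v, ∀ A ∈ part v, A.card = d)
    (hdisj : ∀ v w, v ≠ w → Disjoint (part v) (part w))
    (hedge : ∃ u v : V, G.Adj u v) :
    ∃ G'' : SimpleGraph {A // A ∈ Finset.univ.biUnion part},
      G''.Connected ∧
      -- each vertex consists of exactly one d-set:
      (∀ a : {A // A ∈ Finset.univ.biUnion part},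
        (({a.1} : Finset (Finset (Fin n))).Nonempty) ∧
        (∀ A₀ ∈ ({a.1} : Finset (Finset (Fin n))), A₀.card = d)) ∧
      (∀ a b : {A // A ∈ Finset.univ.biUnion part}, a ≠ b →
        Disjoint ({a.1} : Finset (Finset (Fin n))) {b.1}) ∧
      G''.diam = G.diam ∧
      (spgDimRed n d G part →
        spgDimRed n d G'' (fun a => ({a.1} : Finset (Finset (Fin n))))) ∧
      (spgAdj n d G part →
        spgAdj n d G'' (fun a => ({a.1} : Finset (Finset (Fin n))))) ∧
      (spgEndpoint n d part →
        spgEndpoint n d (fun a : {A // A ∈ Finset.univ.biUnion part} =>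
          ({a.1} : Finset (Finset (Fin n))))) := by
  have hsurj := vertexOf_surjective hne hdisj
  obtain ⟨u, v, huv⟩ := hedge
  have : Nontrivial V := ⟨u, v, huv.ne⟩
  refine ⟨G.blowup (vertexOf part), hconn.blowup hsurj, fun a => ⟨singleton_nonempty _, ?_⟩,
    fun a b hab => disjoint_singleton.2 fun e => hab (Subtype.ext e),
    congrArg ENat.toNat (ediam_blowup hsurj), spgDimRed_blowup hdisj, spgAdj_blowup,
    spgEndpoint_singleton⟩
  simpa using hcard _ _ (mem_part_vertexOf a)

/-- Any subset partition graph with at least one edge can be turned into a subset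
partition graph (on the vertex set `𝒜` itself, each vertex carrying exactly one
`d`-set) with the same underlying family, the same diameter, and inheriting
dimension reduction, adjacency and endpoint count. -/
theorem spg_to_singleton_spg (n d : ℕ) (V : Type) [Fintype V] [DecidableEq V]
    (G : SimpleGraph V) (part : V → Finset (Finset (Fin n)))
    (hconn : G.Connected)
    (hne : ∀ v, (part v).Nonempty)
    (hcard : ∀ v, ∀ A ∈ part v, A.card = d)
    (hdisj : ∀ v w, v ≠ w → Disjoint (part v) (part w))
    (hedge : ∃ u v : V, G.Adj u v) :
    ∃ G'' : SimpleGraph {A // A ∈ Finset.univ.biUnion part},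
      G''.Connected ∧
      -- each vertex consists of exactly one d-set:
      (∀ a : {A // A ∈ Finset.univ.biUnion part},
        (({a.1} : Finset (Finset (Fin n))).Nonempty) ∧
        (∀ A₀ ∈ ({a.1} : Finset (Finset (Fin n))), A₀.card = d)) ∧
      (∀ a b : {A // A ∈ Finset.univ.biUnion part}, a ≠ b →
        Disjoint ({a.1} : Finset (Finset (Fin n))) {b.1}) ∧
      G''.diam = G.diam ∧
      (spgDimRed n d G part →
        spgDimRed n d G'' (fun a => ({a.1} : Finset (Finset (Fin n))))) ∧
      (spgAdj n d G part →
        spgAdj n d G'' (fun a => ({a.1} : Finset (Finset (Fin n))))) ∧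
      (spgEndpoint n d part →
        spgEndpoint n d (fun a : {A // A ∈ Finset.univ.biUnion part} =>
          ({a.1} : Finset (Finset (Fin n))))) :=
  spg_to_singleton_spg_general n d V G part hconn hne hcard hdisj hedge
end

section
/- Let n be a multiple of 4 with n ≥ 8, let d = n/4, and let j be an integer with 1 ≤ j ≤ d−1. Then min{Λ(n/2, d−j), Λ(n/2, j)} ≥ min{⌊(n/2 − (d−j−1)) / (3 ln(n/2))⌋, ⌊(n/2 − (j−1)) / (3 ln(n/2))⌋}. -/
/-- `L` is a layer family of dimension `d` on the symbol set `Fin n`. -/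
def IsLayerFamily (n d : ℕ) {ℓ : ℕ} (L : Fin ℓ → Finset (Finset (Fin n))) : Prop :=
  0 < ℓ ∧ (∀ k, (L k).Nonempty) ∧ (∀ k, ∀ A ∈ L k, A.card = d) ∧
    ∀ k k', k ≠ k' → Disjoint (L k) (L k')

/-- `Λ(n, d)`: the maximal number of layers of a `d`-dimensional connected layer
family (i.e. a layer family with dimension reduction) on `n` symbols. -/
noncomputable def Lambda (n d : ℕ) : ℕ :=
  sSup {ℓ : ℕ | ∃ L : Fin ℓ → Finset (Finset (Fin n)),
    IsLayerFamily n d L ∧ lfDimRed n d L}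

lemma lambda_bdd (m d : ℕ) :
    BddAbove {ℓ : ℕ | ∃ L : Fin ℓ → Finset (Finset (Fin m)),
      IsLayerFamily m d L ∧ lfDimRed m d L} := by
  refine ⟨2 ^ m, ?_⟩
  rintro ℓ ⟨L, ⟨-, hne, -, hdisj⟩, -⟩
  have hinj : Function.Injective fun k : Fin ℓ => (hne k).choose := by
    intro k k' h
    by_contra hkk
    have h1 := (hne k).choose_spec
    have h2 : (hne k).choose ∈ L k' := by
      have := (hne k').choose_spec
      simpa [← h] using this
    exact Finset.disjoint_left.mp (hdisj k k' hkk) h1 h2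
  calc ℓ = Fintype.card (Fin ℓ) := (Fintype.card_fin ℓ).symm
    _ ≤ Fintype.card (Finset (Fin m)) := Fintype.card_le_of_injective _ hinj
    _ = 2 ^ m := by simp [Fintype.card_finset]

lemma lambda_lb (m d : ℕ) (hd : 1 ≤ d) (hdm : d ≤ m) :
    m - d + 1 ≤ Lambda m d := by
  set ℓ := m - d + 1 with hℓ
  have hval : ∀ k : Fin ℓ, (k : ℕ) ≤ m - d := fun k => Nat.lt_succ_iff.mp k.isLt
  have hbound : ∀ k : Fin ℓ, ∀ x ∈ Finset.Ico (k : ℕ) ((k : ℕ) + d), x < m := by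
    intro k x hx
    have := (Finset.mem_Ico.mp hx).2
    have : x < (m - d) + d := lt_of_lt_of_le this (by omega)
    omega
  set A : Fin ℓ → Finset (Fin m) :=
    fun k => (Finset.Ico (k : ℕ) ((k : ℕ) + d)).attachFin (hbound k) with hA
  have hmemA : ∀ (k : Fin ℓ) (x : Fin m), x ∈ A k ↔ (k : ℕ) ≤ x ∧ (x : ℕ) < k + d := by
    intro k x
    simp [hA, Finset.mem_attachFin, Finset.mem_Ico]
  refine le_csSup (lambda_bdd m d) ⟨fun k => {A k}, ⟨Nat.succ_pos _, fun k => ⟨A k, Finset.mem_singleton_self _⟩, ?_, ?_⟩, ?_⟩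
  · intro k B hB
    rw [Finset.mem_singleton] at hB
    subst hB
    simp [hA, Finset.card_attachFin]
  · intro k k' hkk
    rw [Finset.disjoint_singleton]
    intro hAA
    apply hkk
    have h1 : (⟨(k : ℕ), by omega⟩ : Fin m) ∈ A k := by
      rw [hmemA]; simp; omega
    have h2 : (⟨(k' : ℕ), by omega⟩ : Fin m) ∈ A k' := by
      rw [hmemA]; simp; omega
    rw [hAA] at h1
    rw [← hAA] at h2
    rw [hmemA] at h1 h2
    have : (k : ℕ) = (k' : ℕ) := by
      simp at h1 h2; omega
    exact Fin.ext this
  · intro F hF k₁ k₂ k₃ h12 h23 ⟨B₁, hB₁, hFB₁⟩ ⟨B₃, hB₃, hFB₃⟩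
    rw [Finset.mem_singleton] at hB₁ hB₃
    subst hB₁; subst hB₃
    refine ⟨A k₂, Finset.mem_singleton_self _, ?_⟩
    intro x hx
    have h1 := (hmemA k₁ x).mp (hFB₁ hx)
    have h3 := (hmemA k₃ x).mp (hFB₃ hx)
    rw [hmemA]
    have e12 : (k₁ : ℕ) ≤ k₂ := h12
    have e23 : (k₂ : ℕ) ≤ k₃ := h23
    omega

lemma floor_bound (m d : ℕ) (hm : 4 ≤ m) (hd : 1 ≤ d) (hdm : d ≤ m) :
    ⌊((m : ℝ) - ((d : ℝ) - 1)) / (3 * Real.log m)⌋₊ ≤ m - d + 1 := by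
  have hx : ((m : ℝ) - ((d : ℝ) - 1)) = ((m - d + 1 : ℕ) : ℝ) := by
    push_cast [Nat.cast_sub hdm]; ring
  have hlog : (1 : ℝ) ≤ 3 * Real.log m := by
    have h1 : (1 : ℝ) ≤ Real.log m := by
      rw [Real.le_log_iff_exp_le (by positivity)]
      calc Real.exp 1 ≤ 2.7182818286 := Real.exp_one_lt_d9.le
        _ ≤ (4 : ℝ) := by norm_num
        _ ≤ m := by exact_mod_cast hm
    linarith
  calc ⌊((m : ℝ) - ((d : ℝ) - 1)) / (3 * Real.log m)⌋₊
      ≤ ⌊((m - d + 1 : ℕ) : ℝ)⌋₊ := by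
        apply Nat.floor_le_floor
        rw [hx]
        exact div_le_self (by positivity) hlog
    _ = m - d + 1 := Nat.floor_natCast _

/-- For `n` a multiple of `4`, `d = n/4`, and `1 ≤ j ≤ d - 1`:
`min {Λ(n/2, d-j), Λ(n/2, j)} ≥
 min {⌊(n/2 - (d-j-1)) / (3 ln (n/2))⌋, ⌊(n/2 - (j-1)) / (3 ln (n/2))⌋}`. -/
theorem layers_in_mesh (n : ℕ) (h4 : 4 ∣ n) (hn : 8 ≤ n) (d : ℕ) (hd : d = n / 4)
    (j : ℕ) (hj1 : 1 ≤ j) (hj2 : j ≤ d - 1) :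
    min ⌊((n : ℝ) / 2 - ((d : ℝ) - (j : ℝ) - 1)) / (3 * Real.log ((n : ℝ) / 2))⌋₊
        ⌊((n : ℝ) / 2 - ((j : ℝ) - 1)) / (3 * Real.log ((n : ℝ) / 2))⌋₊
      ≤ min (Lambda (n / 2) (d - j)) (Lambda (n / 2) j) := by
  obtain ⟨q, hq⟩ := h4
  have hdq : d = q := by omega
  set m := n / 2 with hm
  have hm2 : m = 2 * d := by omega
  have hd2 : 2 ≤ d := by omega
  have hm4 : 4 ≤ m := by omega
  have hcast : (n : ℝ) / 2 = (m : ℝ) := by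
    have h : n = 2 * m := by omega
    rw [h]; push_cast; ring
  have hdj : (d : ℝ) - (j : ℝ) = ((d - j : ℕ) : ℝ) := by
    rw [Nat.cast_sub (by omega : j ≤ d)]
  rw [hcast, hdj]
  apply min_le_min
  · calc ⌊((m : ℝ) - (((d - j : ℕ) : ℝ) - 1)) / (3 * Real.log m)⌋₊
        ≤ m - (d - j) + 1 := floor_bound m (d - j) hm4 (by omega) (by omega)
      _ ≤ Lambda m (d - j) := lambda_lb m (d - j) (by omega) (by omega)
  · calc ⌊((m : ℝ) - ((j : ℝ) - 1)) / (3 * Real.log m)⌋₊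
        ≤ m - j + 1 := floor_bound m j hm4 hj1 (by omega)
      _ ≤ Lambda m j := lambda_lb m j hj1 (by omega)
end

section
/- Let n and d be positive integers, let 𝒟 be a family of d-element subsets of [n], and let 𝒞 = {D(C) : C ∈ 𝒟} be the corresponding family of correspondence sets. Let ℐ be a family of subsets of {1,2} × [n] each of width exactly d+1, such that |π(I) ∩ π(I')| ≤ d−2 for all distinct I, I' ∈ ℐ. Then every subset S of {1,2} × [n] with |S| = 2d−1 is contained in at most two members of 𝒞 ∪ ℐ. -/
/-- The projection `π` of a subset of `{1,2} × [n]` onto the symbol coordinate. -/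
def projW {n : ℕ} (S : Finset (Fin 2 × Fin n)) : Finset (Fin n) := S.image Prod.snd

/-- Endpoint count: with `𝒞` the doublings of a family `𝒟` of `d`-sets and `ℐ` a family
of width-`(d+1)` sets whose projections pairwise intersect in at most `d - 2` elements,
every set `S` of cardinality `2d - 1` is contained in at most two members of `𝒞 ∪ ℐ`. -/
theorem endpoint_count_doubled (n d : ℕ) (hn : 0 < n) (hd : 0 < d)
    (𝒟 : Finset (Finset (Fin n))) (h𝒟 : ∀ C ∈ 𝒟, C.card = d)
    (𝒞 : Finset (Finset (Fin 2 × Fin n)))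
    (h𝒞 : 𝒞 = 𝒟.image (fun C => (Finset.univ : Finset (Fin 2)) ×ˢ C))
    (ℐ : Finset (Finset (Fin 2 × Fin n)))
    (hI : ∀ I ∈ ℐ, (projW I).card = d + 1)
    (hII : ∀ I ∈ ℐ, ∀ I' ∈ ℐ, I ≠ I' → (projW I ∩ projW I').card ≤ d - 2)
    (S : Finset (Fin 2 × Fin n)) (hS : S.card = 2 * d - 1) :
    (((𝒞 ∪ ℐ).filter (fun T => S ⊆ T)).card) ≤ 2 := by
  classical
  -- projW S has at least d elements
  have hcard : d ≤ (projW S).card := by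
    have h1 : S ⊆ (Finset.univ : Finset (Fin 2)) ×ˢ projW S := by
      intro p hp
      rw [Finset.mem_product]
      exact ⟨Finset.mem_univ _, Finset.mem_image_of_mem _ hp⟩
    have h2 := Finset.card_le_card h1
    rw [Finset.card_product, Finset.card_univ, Fintype.card_fin] at h2
    omega
  have hmono : ∀ T : Finset (Fin 2 × Fin n), S ⊆ T → projW S ⊆ projW T :=
    fun T hT => Finset.image_subset_image hT
  -- at most one member of 𝒞 contains S
  have hC1 : (𝒞.filter (fun T => S ⊆ T)).card ≤ 1 := by
    rw [Finset.card_le_one]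
    intro T hT T' hT'
    simp only [Finset.mem_filter] at hT hT'
    obtain ⟨hTmem, hTS⟩ := hT
    obtain ⟨hT'mem, hT'S⟩ := hT'
    rw [h𝒞, Finset.mem_image] at hTmem hT'mem
    obtain ⟨C, hC, rfl⟩ := hTmem
    obtain ⟨C', hC', rfl⟩ := hT'mem
    have hsub : projW S ⊆ C := by
      intro x hx
      rw [projW, Finset.mem_image] at hx
      obtain ⟨p, hp, rfl⟩ := hx
      have := hTS hp
      rw [Finset.mem_product] at this
      exact this.2
    have hsub' : projW S ⊆ C' := by
      intro x hx
      rw [projW, Finset.mem_image] at hx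
      obtain ⟨p, hp, rfl⟩ := hx
      have := hT'S hp
      rw [Finset.mem_product] at this
      exact this.2
    have e1 : projW S = C := Finset.eq_of_subset_of_card_le hsub (by rw [h𝒟 C hC]; exact hcard)
    have e2 : projW S = C' := Finset.eq_of_subset_of_card_le hsub' (by rw [h𝒟 C' hC']; exact hcard)
    rw [← e1, ← e2]
  -- at most one member of ℐ contains S
  have hI1 : (ℐ.filter (fun T => S ⊆ T)).card ≤ 1 := by
    rw [Finset.card_le_one]
    intro T hT T' hT'
    simp only [Finset.mem_filter] at hT hT'
    by_contra hne
    have hcut := hII T hT.1 T' hT'.1 hne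
    have hsub : projW S ⊆ projW T ∩ projW T' :=
      Finset.subset_inter (hmono T hT.2) (hmono T' hT'.2)
    have := Finset.card_le_card hsub
    omega
  calc ((𝒞 ∪ ℐ).filter (fun T => S ⊆ T)).card
      = (𝒞.filter (fun T => S ⊆ T) ∪ ℐ.filter (fun T => S ⊆ T)).card := by
        rw [Finset.filter_union]
    _ ≤ (𝒞.filter (fun T => S ⊆ T)).card + (ℐ.filter (fun T => S ⊆ T)).card :=
        Finset.card_union_le _ _
    _ ≤ 2 := by omega
end

section
/- Let d ≥ 4 be an integer, let A and B be disjoint finite sets with |A| = |B| = 2d, and let 𝒰 be a family of subsets of A such that for every C' ⊆ A with |C'| ≤ 3d/4 there are at most three sets U ∈ 𝒰 with |U \ C'| ≤ 1. Let j' be an integer with ⌈d/4⌉ ≤ j' ≤ ⌊3d/4⌋ − 1, and let C ⊆ A ∪ B satisfy |C| ≤ d−1, |C ∩ A| ≤ d−j', |C ∩ B| ≤ j', and contain no member of 𝒰. Then there exists a set C̃ with C ⊆ C̃ ⊆ A ∪ B such that |C̃| = d−1, |C̃ ∩ A| ≤ d−j', |C̃ ∩ B| ≤ j', and C̃ contains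 no member of 𝒰. -/
/-- Extension lemma: let `d ≥ 4`, `A` and `B` disjoint with `|A| = |B| = 2d`, and `𝒰` a
family of subsets of `A` such that every `C' ⊆ A` with `|C'| ≤ 3d/4` satisfies
`|U \ C'| ≤ 1` for at most three `U ∈ 𝒰`. If `⌈d/4⌉ ≤ j' ≤ ⌊3d/4⌋ - 1` and
`C ⊆ A ∪ B` satisfies `|C| ≤ d - 1`, `|C ∩ A| ≤ d - j'`, `|C ∩ B| ≤ j'`, and contains
no member of `𝒰`, then `C` extends to a `(d-1)`-set `C̃ ⊆ A ∪ B` with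
`|C̃ ∩ A| ≤ d - j'`, `|C̃ ∩ B| ≤ j'` containing no member of `𝒰`. -/
theorem extend_to_d_minus_one {α : Type} [DecidableEq α] (d : ℕ) (hd : 4 ≤ d)
    (A B : Finset α) (hAB : Disjoint A B) (hA : A.card = 2 * d) (hB : B.card = 2 * d)
    (𝒰 : Finset (Finset α)) (hUA : ∀ U ∈ 𝒰, U ⊆ A)
    (h𝒰 : ∀ C' : Finset α, C' ⊆ A → 4 * C'.card ≤ 3 * d →
      (𝒰.filter (fun U => (U \ C').card ≤ 1)).card ≤ 3)
    (j' : ℕ) (hj'1 : ⌈(d : ℚ) / 4⌉₊ ≤ j') (hj'2 : j' ≤ ⌊(3 * (d : ℚ)) / 4⌋₊ - 1)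
    (C : Finset α) (hC : C ⊆ A ∪ B) (hCcard : C.card ≤ d - 1)
    (hCA : (C ∩ A).card ≤ d - j') (hCB : (C ∩ B).card ≤ j')
    (hCU : ∀ U ∈ 𝒰, ¬ U ⊆ C) :
    ∃ Ct : Finset α, C ⊆ Ct ∧ Ct ⊆ A ∪ B ∧ Ct.card = d - 1 ∧
      (Ct ∩ A).card ≤ d - j' ∧ (Ct ∩ B).card ≤ j' ∧ ∀ U ∈ 𝒰, ¬ U ⊆ Ct := by
  -- numeric consequences
  have hq1 : (d : ℚ) / 4 ≤ (j' : ℚ) := Nat.ceil_le.mp hj'1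
  have hn1 : d ≤ 4 * j' := by
    have : (d : ℚ) ≤ 4 * (j' : ℚ) := by linarith
    exact_mod_cast this
  have hfloor3 : 3 ≤ ⌊(3 * (d : ℚ)) / 4⌋₊ := by
    apply Nat.le_floor
    have : (4 : ℚ) ≤ (d : ℚ) := by exact_mod_cast hd
    linarith
  have hq2 : ((j' : ℚ) + 1) ≤ 3 * (d : ℚ) / 4 := by
    have h1 : j' + 1 ≤ ⌊(3 * (d : ℚ)) / 4⌋₊ := by omega
    have h2 : ((j' + 1 : ℕ) : ℚ) ≤ 3 * (d : ℚ) / 4 := (Nat.le_floor_iff (by positivity)).mp h1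
    push_cast at h2
    linarith
  have hn2 : 4 * j' + 4 ≤ 3 * d := by
    have : 4 * ((j' : ℚ) + 1) ≤ 3 * (d : ℚ) := by linarith
    exact_mod_cast this
  -- main induction
  have key : ∀ k : ℕ, ∀ C : Finset α, C ⊆ A ∪ B → C.card ≤ d - 1 → d - 1 ≤ C.card + k →
      (C ∩ A).card ≤ d - j' → (C ∩ B).card ≤ j' → (∀ U ∈ 𝒰, ¬ U ⊆ C) →
      ∃ Ct : Finset α, C ⊆ Ct ∧ Ct ⊆ A ∪ B ∧ Ct.card = d - 1 ∧
        (Ct ∩ A).card ≤ d - j' ∧ (Ct ∩ B).card ≤ j' ∧ ∀ U ∈ 𝒰, ¬ U ⊆ Ct := by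
    intro k
    induction k with
    | zero =>
      intro C hC h1 h2 hA' hB' hU'
      exact ⟨C, Finset.Subset.refl C, hC, by omega, hA', hB', hU'⟩
    | succ k ih =>
      intro C hC h1 h2 hA' hB' hU'
      by_cases hcard : C.card = d - 1
      · exact ⟨C, Finset.Subset.refl C, hC, hcard, hA', hB', hU'⟩
      have hcard2 : C.card + 2 ≤ d := by omega
      have hsplitset : C = C ∩ A ∪ C ∩ B := by
        rw [← Finset.inter_union_distrib_left]
        exact (Finset.inter_eq_left.mpr hC).symm
      have hsplit : (C ∩ A).card + (C ∩ B).card = C.card := by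
        have h := Finset.card_union_of_disjoint
          (hAB.mono (Finset.inter_subset_right (s₁ := C)) (Finset.inter_subset_right (s₁ := C)))
        rw [← hsplitset] at h
        omega
      by_cases hBfull : (C ∩ B).card < j'
      · -- add an element of B
        have hBC : B \ C = B \ (C ∩ B) := by
          ext x; simp [Finset.mem_sdiff]
        have hBCcard : (B \ C).card = 2 * d - (C ∩ B).card := by
          rw [hBC, Finset.card_sdiff_of_subset Finset.inter_subset_right, hB]
        have hne : (B \ C).Nonempty := by
          rw [← Finset.card_pos, hBCcard]; omega
        obtain ⟨b, hb⟩ := hne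
        rw [Finset.mem_sdiff] at hb
        have hbA : b ∉ A := fun h => (hAB.forall_ne_finset h hb.1) rfl
        have h1' : (insert b C).card = C.card + 1 := Finset.card_insert_of_notMem hb.2
        have hiA : insert b C ∩ A = C ∩ A := Finset.insert_inter_of_notMem hbA
        have hiB : insert b C ∩ B = insert b (C ∩ B) := Finset.insert_inter_of_mem hb.1
        obtain ⟨Ct, hCt1, hCt2, hCt3, hCt4, hCt5, hCt6⟩ := ih (insert b C)
          (Finset.insert_subset (Finset.mem_union_right _ hb.1) hC)
          (by omega) (by omega)
          (by rw [hiA]; exact hA')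
          (by rw [hiB]
              exact le_trans (Finset.card_insert_le _ _) (by omega))
          (by intro U hU hsub
              apply hU' U hU
              intro x hx
              rcases Finset.mem_insert.mp (hsub hx) with h | h
              · exact absurd (hUA U hU hx) (h ▸ hbA)
              · exact h)
        exact ⟨Ct, (Finset.subset_insert _ _).trans hCt1, hCt2, hCt3, hCt4, hCt5, hCt6⟩
      · -- B side full; add an element of A
        have hBeq : (C ∩ B).card = j' := by omega
        have hCAcard : (C ∩ A).card + j' + 2 ≤ d := by omega
        have hsd : ∀ U ∈ 𝒰, U \ C = U \ (C ∩ A) := by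
          intro U hU
          ext x
          simp only [Finset.mem_sdiff, Finset.mem_inter]
          constructor
          · rintro ⟨hx, hxc⟩; exact ⟨hx, fun h => hxc h.1⟩
          · rintro ⟨hx, hxc⟩; exact ⟨hx, fun h => hxc ⟨h, hUA U hU hx⟩⟩
        set bad : Finset α := (𝒰.filter (fun U => (U \ (C ∩ A)).card ≤ 1)).biUnion
            (fun U => U \ C) with hbad
        have hbadcard : bad.card ≤ 3 := by
          calc bad.card ≤ ∑ U ∈ 𝒰.filter (fun U => (U \ (C ∩ A)).card ≤ 1), (U \ C).card :=
                Finset.card_biUnion_le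
            _ ≤ ∑ U ∈ 𝒰.filter (fun U => (U \ (C ∩ A)).card ≤ 1), 1 := by
                apply Finset.sum_le_sum
                intro U hU
                rw [Finset.mem_filter] at hU
                rw [hsd U hU.1]
                exact hU.2
            _ = (𝒰.filter (fun U => (U \ (C ∩ A)).card ≤ 1)).card := by simp
            _ ≤ 3 := h𝒰 (C ∩ A) Finset.inter_subset_right (by omega)
        have hAC : A \ C = A \ (C ∩ A) := by
          ext x; simp [Finset.mem_sdiff]
        have hACcard : (A \ C).card = 2 * d - (C ∩ A).card := by
          rw [hAC, Finset.card_sdiff_of_subset Finset.inter_subset_right, hA]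
        have hne : ((A \ C) \ bad).Nonempty := by
          rw [← Finset.card_pos]
          have h4 := Finset.card_le_card_sdiff_add_card (s := A \ C) (t := bad)
          omega
        obtain ⟨a, ha⟩ := hne
        rw [Finset.mem_sdiff, Finset.mem_sdiff] at ha
        obtain ⟨⟨haA, haC⟩, habad⟩ := ha
        have haB : a ∉ B := fun h => (hAB.forall_ne_finset haA h) rfl
        have h1' : (insert a C).card = C.card + 1 := Finset.card_insert_of_notMem haC
        have hiA : insert a C ∩ A = insert a (C ∩ A) := Finset.insert_inter_of_mem haA
        have hiB : insert a C ∩ B = C ∩ B := Finset.insert_inter_of_notMem haB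
        obtain ⟨Ct, hCt1, hCt2, hCt3, hCt4, hCt5, hCt6⟩ := ih (insert a C)
          (Finset.insert_subset (Finset.mem_union_left _ haA) hC)
          (by omega) (by omega)
          (by rw [hiA]
              exact le_trans (Finset.card_insert_le _ _) (by omega))
          (by rw [hiB]; exact hB')
          (by intro U hU hsub
              apply habad
              rw [hbad, Finset.mem_biUnion]
              have hUC : ¬ U ⊆ C := hU' U hU
              have hUdiff : U \ C ⊆ {a} := by
                intro x hx
                rw [Finset.mem_sdiff] at hx
                rcases Finset.mem_insert.mp (hsub hx.1) with h | h
                · simp [h]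
                · exact absurd h hx.2
              have haU : a ∈ U \ C := by
                obtain ⟨x, hxU, hxC⟩ := Finset.not_subset.mp hUC
                have hx1 : x ∈ ({a} : Finset α) := hUdiff (Finset.mem_sdiff.mpr ⟨hxU, hxC⟩)
                rw [Finset.mem_singleton] at hx1
                subst hx1; exact Finset.mem_sdiff.mpr ⟨hxU, hxC⟩
              refine ⟨U, Finset.mem_filter.mpr ⟨hU, ?_⟩, haU⟩
              rw [← hsd U hU]
              exact (Finset.card_le_card hUdiff).trans (by simp))
        exact ⟨Ct, (Finset.subset_insert _ _).trans hCt1, hCt2, hCt3, hCt4, hCt5, hCt6⟩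
  exact key (d - 1 - C.card) C hC hCcard (by omega) hCA hCB hCU
end

section
/- Let N, M, n be positive integers with M ≤ N and n ≤ N, let V be a set of size N, and let F ⊆ V with |F| = M. Let S be a uniformly random n-element subset of V and let H = |S ∩ F| (so H is a hypergeometric random variable counting successes in n draws without replacement from a population of N containing M successes). Then for every real t ≥ 0, the probability that H ≥ (M/N + t)·n is at most exp(−2t²n). -/
open scoped Classical

/-- The probability of the event `p` under the uniform distribution on the finite
sample space `Ω`. -/
noncomputable def probOf {β : Type*} (Ω : Finset β) (p : β → Prop) : ℝ :=
  ((Ω.filter p).card : ℝ) / (Ω.card : ℝ)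

/-!
Chernoff's method with `λ = 4t`. Writing `x ^ H = ∑ i, (H choose i) (x - 1) ^ i`, the moment
generating function of `H = |S ∩ F|` becomes a positive combination of the factorial moments
`E (H choose i) = (n choose i) (M choose i) / (N choose i)`, and `(M choose i) / (N choose i) ≤ p ^ i`
with `p = M / N`. Hence `E x ^ H ≤ (1 + p (x - 1)) ^ n`, the moment generating function of a
binomial variable, which Hoeffding's lemma for a Bernoulli variable bounds by
`exp (n (p λ + λ² / 8))` at `x = exp λ`.
-/

open Finset Real MeasureTheory ProbabilityTheory

lemma one_add_pow_eq_sum_range {R : Type*} [CommSemiring R] {k n : ℕ} (hkn : k ≤ n) (y : R) :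
    (1 + y) ^ k = ∑ i ∈ range (n + 1), (k.choose i : R) * y ^ i := by
  rw [add_comm, add_pow]
  refine sum_subset (range_subset_range.2 (by omega : k + 1 ≤ n + 1)) (fun i _ hi => ?_) |>.trans ?_
  · simp [Nat.choose_eq_zero_of_lt (by simpa using hi : k < i)]
  · exact sum_congr rfl fun i _ => by ring

lemma Nat.choose_mul_pow_le_choose_mul_pow {M N : ℕ} (hMN : M ≤ N) (i : ℕ) :
    M.choose i * N ^ i ≤ N.choose i * M ^ i := by
  suffices M.descFactorial i * N ^ i ≤ N.descFactorial i * M ^ i by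
    simp only [Nat.descFactorial_eq_factorial_mul_choose, mul_assoc] at this
    exact Nat.le_of_mul_le_mul_left this i.factorial_pos
  induction i with
  | zero => simp
  | succ i ih =>
    have key : (M - i) * N ≤ (N - i) * M := by
      rw [Nat.sub_mul, Nat.sub_mul, mul_comm N M]
      exact Nat.sub_le_sub_left (by gcongr) _
    rw [Nat.descFactorial_succ, Nat.descFactorial_succ, pow_succ, pow_succ]
    calc (M - i) * M.descFactorial i * (N ^ i * N)
        = M.descFactorial i * N ^ i * ((M - i) * N) := by ring
      _ ≤ N.descFactorial i * M ^ i * ((N - i) * M) := by gcongr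
      _ = _ := by ring

lemma Nat.cast_choose_le_choose_mul_div_pow {M N : ℕ} (hMN : M ≤ N) (i : ℕ) :
    (M.choose i : ℝ) ≤ N.choose i * ((M : ℝ) / N) ^ i := by
  rcases N.eq_zero_or_pos with rfl | hN
  · obtain rfl := Nat.le_zero.1 hMN
    cases i <;> simp
  rw [div_pow, ← mul_div_assoc, le_div_iff₀ (by positivity)]
  exact_mod_cast Nat.choose_mul_pow_le_choose_mul_pow hMN i

lemma one_sub_add_mul_exp_le {p : ℝ} (hp0 : 0 ≤ p) (hp1 : p ≤ 1) (l : ℝ) :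
    1 - p + p * exp l ≤ exp (p * l + l ^ 2 / 8) := by
  let X : Bool → ℝ := fun b => if b then 1 else 0
  have hoeffding := (hasSubgaussianMGF_of_mem_Icc (μ := bernoulliMeasure true false ⟨p, hp0, hp1⟩)
    (X := X) (a := 0) (b := 1) Measurable.of_discrete.aemeasurable
    (ae_of_all _ fun b => by cases b <;> simp [X])).mgf_le l
  simp only [mgf, integral_bernoulliMeasure, X] at hoeffding
  norm_num at hoeffding
  have h1 : exp (p * l) * exp (l * (1 - p)) = exp l := by rw [← exp_add]; ring_nf
  have h2 : exp (p * l) * exp (-(l * p)) = 1 := by rw [← exp_add]; ring_nf; exact exp_zero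
  calc 1 - p + p * exp l
      = exp (p * l) * (p * exp (l * (1 - p)) + (1 - p) * exp (-(l * p))) := by
        linear_combination (-p) * h1 - (1 - p) * h2
    _ ≤ exp (p * l) * exp (1 / 4 * l ^ 2 / 2) := by gcongr
    _ = exp (p * l + l ^ 2 / 8) := by rw [← exp_add]; ring_nf

lemma probOf_le_exp_mul_sum {β : Type*} (Ω : Finset β) (f : β → ℝ) (a : ℝ) {l : ℝ}
    (hl : 0 ≤ l) :
    probOf Ω (fun ω => a ≤ f ω) ≤ exp (-(l * a)) * (∑ ω ∈ Ω, exp (l * f ω)) / #Ω := by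
  unfold probOf
  gcongr
  calc (#(Ω.filter fun ω => a ≤ f ω) : ℝ) = ∑ ω ∈ Ω.filter (fun ω => a ≤ f ω), 1 := by simp
    _ ≤ ∑ ω ∈ Ω.filter (fun ω => a ≤ f ω), exp (l * (f ω - a)) :=
        sum_le_sum fun ω hω => one_le_exp (mul_nonneg hl (sub_nonneg.2 (mem_filter.1 hω).2))
    _ ≤ ∑ ω ∈ Ω, exp (l * (f ω - a)) :=
        sum_le_sum_of_subset_of_nonneg (filter_subset _ _) fun _ _ _ => (exp_pos _).le
    _ = exp (-(l * a)) * ∑ ω ∈ Ω, exp (l * f ω) := by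
        rw [mul_sum]
        exact sum_congr rfl fun ω _ => by rw [← exp_add]; ring_nf

section Hypergeometric

variable {α : Type*} [DecidableEq α] {V F : Finset α}

lemma sum_choose_card_inter (hFV : F ⊆ V) {i n : ℕ} (hin : i ≤ n) :
    ∑ S ∈ powersetCard n V, (#(S ∩ F)).choose i = (#F).choose i * (#V - i).choose (n - i) := by
  calc ∑ S ∈ powersetCard n V, (#(S ∩ F)).choose i
      = ∑ S ∈ powersetCard n V, #((powersetCard i F).filter (· ⊆ S)) := by
        refine sum_congr rfl fun S _ => ?_
        rw [← card_powersetCard]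
        congr 1
        ext T
        simp only [mem_powersetCard, mem_filter, subset_inter_iff]
        tauto
    _ = ∑ T ∈ powersetCard i F, #((powersetCard n V).filter (T ⊆ ·)) :=
        sum_card_bipartiteAbove_eq_sum_card_bipartiteBelow _
    _ = ∑ T ∈ powersetCard i F, (#V - i).choose (n - i) := by
        refine sum_congr rfl fun T hT => ?_
        obtain ⟨hTF, rfl⟩ := mem_powersetCard.1 hT
        exact card_filter_powersetCard_subset T V n (hTF.trans hFV) hin
    _ = (#F).choose i * (#V - i).choose (n - i) := by
        rw [sum_const, card_powersetCard, smul_eq_mul]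

lemma sum_pow_card_inter_le (hFV : F ⊆ V) (n : ℕ) {x : ℝ} (hx : 1 ≤ x) :
    ∑ S ∈ powersetCard n V, x ^ #(S ∩ F) ≤ (#V).choose n * (1 + #F / #V * (x - 1)) ^ n := by
  rcases lt_or_ge #V n with hVn | hnV
  · simp [powersetCard_eq_empty.2 hVn, Nat.choose_eq_zero_of_lt hVn]
  have hx' : x = 1 + (x - 1) := by ring
  calc ∑ S ∈ powersetCard n V, x ^ #(S ∩ F)
      = ∑ S ∈ powersetCard n V, ∑ i ∈ range (n + 1), ((#(S ∩ F)).choose i : ℝ) * (x - 1) ^ i := by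
        refine sum_congr rfl fun S hS => ?_
        have hSn : #(S ∩ F) ≤ n := (mem_powersetCard.1 hS).2 ▸ card_le_card inter_subset_left
        rw [hx', add_sub_cancel_left, one_add_pow_eq_sum_range hSn]
    _ = ∑ i ∈ range (n + 1), ((#F).choose i * (#V - i).choose (n - i) : ℕ) * (x - 1) ^ i := by
        rw [sum_comm]
        refine sum_congr rfl fun i hi => ?_
        rw [← sum_choose_card_inter hFV (Nat.lt_succ_iff.1 (mem_range.1 hi)), Nat.cast_sum,
          sum_mul]
    _ ≤ ∑ i ∈ range (n + 1),
          ((#V).choose n * n.choose i : ℕ) * ((#F / #V : ℝ) ^ i * (x - 1) ^ i) := by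
        refine sum_le_sum fun i hi => ?_
        rw [Nat.choose_mul (Nat.lt_succ_iff.1 (mem_range.1 hi))]
        push_cast
        have hchoose := Nat.cast_choose_le_choose_mul_div_pow (card_le_card hFV) i
        have hx1 : 0 ≤ (x - 1) ^ i := pow_nonneg (by linarith) i
        calc _ ≤ ((#V).choose i * ((#F : ℝ) / #V) ^ i) * ((#V - i).choose (n - i) : ℝ)
              * (x - 1) ^ i := by gcongr
          _ = _ := by ring
    _ = (#V).choose n * (1 + #F / #V * (x - 1)) ^ n := by
        rw [one_add_pow_eq_sum_range le_rfl, mul_sum]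
        refine sum_congr rfl fun i _ => ?_
        push_cast
        rw [mul_pow]
        ring

lemma sum_exp_mul_card_inter_le (hFV : F ⊆ V) (n : ℕ) {l : ℝ} (hl : 0 ≤ l) :
    ∑ S ∈ powersetCard n V, exp (l * #(S ∩ F)) ≤
      (#V).choose n * exp (n * (#F / #V * l + l ^ 2 / 8)) := by
  have hp1 : (#F / #V : ℝ) ≤ 1 :=
    div_le_one_of_le₀ (by exact_mod_cast card_le_card hFV) (by positivity)
  calc ∑ S ∈ powersetCard n V, exp (l * #(S ∩ F))
      = ∑ S ∈ powersetCard n V, exp l ^ #(S ∩ F) :=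
        sum_congr rfl fun S _ => by rw [← exp_nat_mul, mul_comm]
    _ ≤ (#V).choose n * (1 + #F / #V * (exp l - 1)) ^ n :=
        sum_pow_card_inter_le hFV n (one_le_exp hl)
    _ ≤ (#V).choose n * exp (#F / #V * l + l ^ 2 / 8) ^ n := by
        have hx : 0 ≤ exp l - 1 := sub_nonneg.2 (one_le_exp hl)
        gcongr
        linarith [one_sub_add_mul_exp_le (by positivity) hp1 l]
    _ = (#V).choose n * exp (n * (#F / #V * l + l ^ 2 / 8)) := by rw [exp_nat_mul]

end Hypergeometric

theorem hypergeometric_right_tail_general {α : Type} [DecidableEq α] (N M n : ℕ)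
    (V F : Finset α) (hV : V.card = N) (hFV : F ⊆ V) (hF : F.card = M)
    (t : ℝ) (ht : 0 ≤ t) :
    probOf (Finset.powersetCard n V)
        (fun S => ((M : ℝ) / (N : ℝ) + t) * (n : ℝ) ≤ ((S ∩ F).card : ℝ))
      ≤ Real.exp (-2 * t ^ 2 * (n : ℝ)) := by
  subst hV hF
  set p : ℝ := #F / #V
  calc _ ≤ exp (-(4 * t * ((p + t) * n))) * (∑ S ∈ powersetCard n V, exp (4 * t * #(S ∩ F)))
        / #(powersetCard n V) := probOf_le_exp_mul_sum _ _ _ (by positivity)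
    _ ≤ exp (-(4 * t * ((p + t) * n))) *
          ((#V).choose n * exp (n * (p * (4 * t) + (4 * t) ^ 2 / 8))) / (#V).choose n := by
        rw [card_powersetCard]
        gcongr
        exact sum_exp_mul_card_inter_le hFV n (by positivity)
    _ ≤ exp (-2 * t ^ 2 * n) := by
        refine div_le_of_le_mul₀ (by positivity) (by positivity) (le_of_eq ?_)
        rw [mul_left_comm, ← exp_add]
        ring_nf

/-- Hypergeometric right tail bound: if `S` is a uniformly random `n`-element subset of
an `N`-element set `V` and `F ⊆ V` has `M` elements, then for `t ≥ 0` the probability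
that `|S ∩ F| ≥ (M/N + t) n` is at most `exp (-2 t² n)`. -/
theorem hypergeometric_right_tail {α : Type} [DecidableEq α] (N M n : ℕ)
    (hN : 0 < N) (hM : 0 < M) (hn : 0 < n) (hMN : M ≤ N) (hnN : n ≤ N)
    (V F : Finset α) (hV : V.card = N) (hFV : F ⊆ V) (hF : F.card = M)
    (t : ℝ) (ht : 0 ≤ t) :
    probOf (Finset.powersetCard n V)
        (fun S => ((M : ℝ) / (N : ℝ) + t) * (n : ℝ) ≤ ((S ∩ F).card : ℝ))
      ≤ Real.exp (-2 * t ^ 2 * (n : ℝ)) :=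
  hypergeometric_right_tail_general N M n V F hV hFV hF t ht
end

section
/- For each integer d ≥ 5 set n = 2d, let δ(d) be a positive integer with δ(d) ≤ n, and let P₁, …, P_{δ(d)} be independent uniformly random (d−1)-element subsets of [n]. Then the probability that there exist indices j ≠ j' with |P_j ∩ P_{j'}| > d−4 tends to 0 as d → ∞. -/
open scoped Classical

/-!
By the union bound over the at most `(2d)²` ordered pairs of indices, it suffices that two
independent uniform `(d-1)`-subsets `A, B` of `[2d]` meet in more than `d - 4` points with
probability `O(d⁴ / C(2d, d-1))`. Such a pair is determined by `A` together with the two sets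
`A \ B` and `B \ A`, each of size at most `2`, so there are at most `C(2d, d-1) · (3 (2d)²)²`
of them. Since `C(2d, d-1) ≥ 4ᵈ / 2d`, the probability is `O(d⁷ / 4ᵈ)`.
-/

open Finset Fintype

variable {ι α β κ : Type*}

lemma probOf_nonneg (Ω : Finset β) (p : β → Prop) : 0 ≤ probOf Ω p := by
  unfold probOf
  positivity

lemma probOf_le_sum (Ω : Finset β) (s : Finset κ) {p : β → Prop} (q : κ → β → Prop)
    (hpq : ∀ x ∈ Ω, p x → ∃ k ∈ s, q k x) :
    probOf Ω p ≤ ∑ k ∈ s, probOf Ω (q k) := by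
  unfold probOf
  rw [← sum_div]
  gcongr
  calc (#{x ∈ Ω | p x} : ℝ) ≤ #(s.biUnion fun k ↦ {x ∈ Ω | q k x}) := by
        gcongr
        intro x hx
        obtain ⟨hxΩ, hpx⟩ := mem_filter.1 hx
        obtain ⟨k, hk, hqx⟩ := hpq x hxΩ hpx
        exact mem_biUnion.2 ⟨k, hk, mem_filter.2 ⟨hxΩ, hqx⟩⟩
    _ ≤ ∑ k ∈ s, (#{x ∈ Ω | q k x} : ℝ) := by exact_mod_cast card_biUnion_le

section PiFinset

variable [Fintype ι] [DecidableEq ι]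

lemma card_filter_piFinset_const_eq_pair (S : Finset α) {i j : ι} (hij : i ≠ j) {a b : α}
    (ha : a ∈ S) (hb : b ∈ S) :
    #{f ∈ piFinset fun _ ↦ S | f i = a ∧ f j = b} = #S ^ (card ι - 2) := by
  rw [← filter_filter]
  -- the filters here are decided classically, the library lemmas use `DecidableEq α`
  erw [← piFinset_update_singleton_eq_filter_piFinset_eq _ _ ha,
    card_filter_piFinset_eq_of_mem _ _ (by simpa [hij.symm] using hb)]
  simp_rw [Function.apply_update (fun _ ↦ card) (fun _ ↦ S)]
  rw [prod_update_of_mem (by simpa using hij), prod_const]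
  simp [card_sdiff, hij, Nat.sub_sub]

lemma card_filter_piFinset_const_pair (S : Finset α) {i j : ι} (hij : i ≠ j)
    (R : α → α → Prop) :
    #{f ∈ piFinset fun _ ↦ S | R (f i) (f j)} =
      #{p ∈ S ×ˢ S | R p.1 p.2} * #S ^ (card ι - 2) := by
  rw [card_eq_sum_card_fiberwise (f := fun f ↦ (f i, f j)) (t := {p ∈ S ×ˢ S | R p.1 p.2})
    (fun f hf ↦ by simp_all), ← smul_eq_mul, ← sum_const]
  refine sum_congr rfl fun ⟨a, b⟩ hab ↦ ?_
  simp only [mem_filter, mem_product] at hab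
  rw [← card_filter_piFinset_const_eq_pair S hij hab.1.1 hab.1.2, filter_filter]
  congr 1
  refine filter_congr fun f _ ↦ ?_
  simp only [Prod.mk.injEq]
  exact ⟨And.right, fun h ↦ ⟨h.1 ▸ h.2 ▸ hab.2, h⟩⟩

lemma probOf_piFinset_const_pair (S : Finset α) {i j : ι} (hij : i ≠ j)
    (R : α → α → Prop) :
    probOf (piFinset fun _ ↦ S) (fun f ↦ R (f i) (f j)) =
      probOf (S ×ˢ S) (fun p ↦ R p.1 p.2) := by
  obtain ⟨k, hk⟩ := Nat.exists_eq_add_of_le' (one_lt_card_iff.2 ⟨i, j, hij⟩)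
  unfold probOf
  rw [card_filter_piFinset_const_pair S hij R, card_piFinset, prod_const, card_univ,
    card_product, hk]
  rcases eq_or_ne (#S : ℝ) 0 with hS | hS
  · simp [hS]
  · push_cast
    rw [pow_add, mul_comm, mul_div_mul_left _ _ (pow_ne_zero _ hS), sq]

lemma probOf_piFinset_const_exists_pair_le (S : Finset α) (R : α → α → Prop) :
    probOf (piFinset fun _ : ι ↦ S) (fun f ↦ ∃ i j, i ≠ j ∧ R (f i) (f j)) ≤
      card ι ^ 2 * probOf (S ×ˢ S) (fun p ↦ R p.1 p.2) := by
  calc _ ≤ ∑ q ∈ univ.offDiag, probOf (piFinset fun _ ↦ S) (fun f ↦ R (f q.1) (f q.2)) :=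
        probOf_le_sum _ _ _ fun f _ ⟨i, j, hij, h⟩ ↦ ⟨(i, j), by simpa using hij, h⟩
    _ = #(univ : Finset ι).offDiag * probOf (S ×ˢ S) (fun p ↦ R p.1 p.2) := by
        rw [Finset.sum_congr rfl fun q hq ↦ probOf_piFinset_const_pair S (mem_offDiag.1 hq).2.2 R,
          sum_const, nsmul_eq_mul]
    _ ≤ _ := by
        gcongr
        · exact probOf_nonneg _ _
        · rw [offDiag_card, card_univ]
          exact_mod_cast (Nat.sub_le _ _).trans_eq (sq _).symm

end PiFinset

lemma card_filter_card_lt_le (U : Finset α) {r : ℕ} (hU : U.Nonempty) :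
    #{t ∈ U.powerset | #t < r} ≤ r * #U ^ (r - 1) := by
  calc #{t ∈ U.powerset | #t < r} ≤ #((range r).biUnion fun i ↦ powersetCard i U) := by
        refine card_le_card fun t ht ↦ ?_
        simp only [mem_filter, mem_powerset] at ht
        exact mem_biUnion.2 ⟨#t, mem_range.2 ht.2, mem_powersetCard.2 ⟨ht.1, rfl⟩⟩
    _ ≤ ∑ i ∈ range r, #U ^ (r - 1) := by
        refine card_biUnion_le.trans (sum_le_sum fun i hi ↦ ?_)
        rw [card_powersetCard]
        exact (Nat.choose_le_pow _ _).trans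
          (Nat.pow_le_pow_right hU.card_pos (Nat.le_sub_one_of_lt (mem_range.1 hi)))
    _ = r * #U ^ (r - 1) := by simp

lemma card_filter_lt_card_inter_add_le [DecidableEq α] (U : Finset α) (k r : ℕ) :
    #{p ∈ powersetCard k U ×ˢ powersetCard k U | k < #(p.1 ∩ p.2) + r} ≤
      #(powersetCard k U) * #{t ∈ U.powerset | #t < r} ^ 2 := by
  rw [sq, ← card_product, ← card_product]
  refine card_le_card_of_injOn (fun p ↦ (p.1, p.1 \ p.2, p.2 \ p.1)) ?_ ?_
  · rintro ⟨A, B⟩ hAB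
    simp only [coe_filter, mem_product, mem_powersetCard, Set.mem_ofPred_eq] at hAB
    obtain ⟨⟨⟨hAU, hA⟩, hBU, hB⟩, hlt⟩ := hAB
    have hAB := card_sdiff_add_card_inter A B
    have hBA := card_sdiff_add_card_inter B A
    rw [inter_comm] at hBA
    simp only [coe_product, coe_filter, Set.mem_prod, mem_coe, mem_powersetCard,
      Set.mem_ofPred_eq, mem_powerset]
    exact ⟨⟨hAU, hA⟩, ⟨sdiff_subset.trans hAU, by omega⟩,
      sdiff_subset.trans hBU, by omega⟩
  · rintro ⟨A, B₁⟩ - ⟨A', B₂⟩ - h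
    simp only [Prod.mk.injEq] at h
    obtain ⟨rfl, h₁, h₂⟩ := h
    refine Prod.ext rfl (ext fun x ↦ ?_)
    have := congrArg (x ∈ ·) h₁
    have := congrArg (x ∈ ·) h₂
    simp only [mem_sdiff, eq_iff_iff] at *
    tauto

lemma probOf_lt_card_inter_add_le [DecidableEq α] (U : Finset α) (k r : ℕ) :
    probOf (powersetCard k U ×ˢ powersetCard k U) (fun p ↦ k < #(p.1 ∩ p.2) + r) ≤
      (#{t ∈ U.powerset | #t < r} : ℝ) ^ 2 / #(powersetCard k U) := by
  unfold probOf
  rw [filter_congr_decidable]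
  rcases eq_or_ne (#(powersetCard k U) : ℝ) 0 with h0 | h0
  · rw [card_product, Nat.cast_mul, h0]
    simp
  rw [card_product, Nat.cast_mul, div_le_div_iff₀ (by positivity) (by positivity)]
  calc _ ≤ ((#(powersetCard k U) * #{t ∈ U.powerset | #t < r} ^ 2 : ℕ) : ℝ) *
        #(powersetCard k U) := by
        gcongr
        exact_mod_cast card_filter_lt_card_inter_add_le U k r
    _ = _ := by push_cast; ring

lemma four_pow_le_two_mul_mul_choose {d : ℕ} (hd : 4 ≤ d) :
    4 ^ d ≤ 2 * d * (2 * d).choose (d - 1) := by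
  have hsucc := Nat.choose_succ_right_eq (2 * d) (d - 1)
  rw [Nat.sub_add_cancel (by omega), show 2 * d - (d - 1) = d + 1 by omega] at hsucc
  have hcentral : d.centralBinom ≤ 2 * (2 * d).choose (d - 1) := by
    refine Nat.le_of_mul_le_mul_right ?_ (by omega : 0 < d)
    rw [Nat.centralBinom_eq_two_mul_choose, hsucc]
    nlinarith
  calc 4 ^ d ≤ d * d.centralBinom := (Nat.four_pow_lt_mul_centralBinom d hd).le
    _ ≤ d * (2 * (2 * d).choose (d - 1)) := Nat.mul_le_mul_left _ hcentral
    _ = _ := by ring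

lemma probOf_exists_large_inter_le {d m : ℕ} (hd : 5 ≤ d) (hm : m ≤ 2 * d) :
    probOf (piFinset fun _ : Fin m ↦ powersetCard (d - 1) (range (2 * d)))
        (fun P ↦ ∃ j j', j ≠ j' ∧ d - 4 < #(P j ∩ P j')) ≤
      1152 * ((d : ℝ) ^ 7 / 4 ^ d) := by
  set S := powersetCard (d - 1) (range (2 * d))
  set N := (2 * d).choose (d - 1)
  have hN : (4 : ℝ) ^ d ≤ 2 * d * N := by
    exact_mod_cast four_pow_le_two_mul_mul_choose (by omega)
  have hNpos : (0 : ℝ) < N := by exact_mod_cast Nat.choose_pos (by omega)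
  have hsmall : #{t ∈ (range (2 * d)).powerset | #t < 3} ≤ 3 * (2 * d) ^ 2 := by
    simpa using card_filter_card_lt_le (range (2 * d)) (r := 3) (nonempty_range_iff.2 (by omega))
  have hpair : probOf (S ×ˢ S) (fun p ↦ d - 4 < #(p.1 ∩ p.2)) ≤
      ((3 * (2 * d) ^ 2 : ℕ) : ℝ) ^ 2 / N := by
    have hshift : (fun p : Finset ℕ × Finset ℕ ↦ d - 4 < #(p.1 ∩ p.2)) =
        fun p ↦ d - 1 < #(p.1 ∩ p.2) + 3 := by
      funext p
      exact propext (by omega)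
    rw [hshift]
    refine (probOf_lt_card_inter_add_le (range (2 * d)) (d - 1) 3).trans ?_
    rw [card_powersetCard, card_range]
    gcongr
  calc _ ≤ (m : ℝ) ^ 2 * probOf (S ×ˢ S) (fun p ↦ d - 4 < #(p.1 ∩ p.2)) := by
        simpa using
          probOf_piFinset_const_exists_pair_le (ι := Fin m) S (fun A B ↦ d - 4 < #(A ∩ B))
    _ ≤ ((2 * d : ℕ) : ℝ) ^ 2 * (((3 * (2 * d) ^ 2 : ℕ) : ℝ) ^ 2 / N) := by
        gcongr
        exact probOf_nonneg _ _
    _ = 576 * (d : ℝ) ^ 6 / N := by push_cast; ring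
    _ ≤ 1152 * ((d : ℝ) ^ 7 / 4 ^ d) := by
        rw [mul_div_assoc', div_le_div_iff₀ hNpos (by positivity)]
        nlinarith [mul_le_mul_of_nonneg_left hN (by positivity : (0 : ℝ) ≤ 576 * d ^ 6)]

/-- For each `d ≥ 5`, set `n = 2d` and let `P 1, …, P (δ d)` (with `0 < δ d ≤ n`) be
independent uniformly random `(d-1)`-element subsets of `[n]`. The probability that
some two of them intersect in more than `d - 4` elements tends to `0` as `d → ∞`. -/
theorem random_P_intersection (δ : ℕ → ℕ)
    (hδ : ∀ d : ℕ, 5 ≤ d → 0 < δ d ∧ δ d ≤ 2 * d) :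
    Filter.Tendsto (fun d : ℕ =>
      probOf (Fintype.piFinset fun _ : Fin (δ d) =>
          Finset.powersetCard (d - 1) (Finset.range (2 * d)))
        (fun P => ∃ j j' : Fin (δ d), j ≠ j' ∧ d - 4 < (P j ∩ P j').card))
      Filter.atTop (nhds 0) := by
  have hbound : Filter.Tendsto (fun d : ℕ ↦ 1152 * ((d : ℝ) ^ 7 / 4 ^ d)) Filter.atTop
      (nhds 0) := by
    simpa using
      (tendsto_pow_const_div_const_pow_of_one_lt 7 (by norm_num : (1 : ℝ) < 4)).const_mul 1152
  refine squeeze_zero' (Filter.Eventually.of_forall fun _ ↦ probOf_nonneg _ _) ?_ hbound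
  filter_upwards [Filter.eventually_ge_atTop 5] with d hd
  exact probOf_exists_large_inter_le hd (hδ d hd).2
end
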